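/- Let k1, k2 ≥ 1, let C1, C2 : Matrix (Fin k1) (Fin k2) ℝ, and set R = C2 − C1. The bi-matrix game (C1, C2) is potential if and only if R i j − R i (k2−1) − R (k1−1) j + R (k1−1) (k2−1) = 0 for all i : Fin k1 and j : Fin k2, where k1−1 and k2−1 denote the last row and column indices. -/
import Mathlib


/-- A bi-matrix game `(C1, C2)` is potential if it admits a potential matrix `P`. -/
def IsPotentialBimatrix {k1 k2 : ℕ} (C1 C2 : Matrix (Fin k1) (Fin k2) ℝ) : Prop :=
  ∃ P : Matrix (Fin k1) (Fin k2) ℝ,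
    (∀ i i' : Fin k1, ∀ j : Fin k2, C1 i j - C1 i' j = P i j - P i' j) ∧
    (∀ i : Fin k1, ∀ j j' : Fin k2, C2 i j - C2 i j' = P i j - P i j')

theorem stmt3 (k1 k2 : ℕ) (hk1 : 1 ≤ k1) (hk2 : 1 ≤ k2)
    (C1 C2 R : Matrix (Fin k1) (Fin k2) ℝ) (hR : R = C2 - C1) :
    IsPotentialBimatrix C1 C2 ↔
      ∀ (i : Fin k1) (j : Fin k2),
        R i j - R i ⟨k2 - 1, by omega⟩ - R ⟨k1 - 1, by omega⟩ j
          + R ⟨k1 - 1, by omega⟩ ⟨k2 - 1, by omega⟩ = 0 := by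
  subst hR
  set i0 : Fin k1 := ⟨k1 - 1, by omega⟩
  set j0 : Fin k2 := ⟨k2 - 1, by omega⟩
  constructor
  · rintro ⟨P, h1, h2⟩ i j
    have a1 := h1 i i0 j
    have a2 := h1 i i0 j0
    have b1 := h2 i j j0
    have b2 := h2 i0 j j0
    simp only [Matrix.sub_apply]
    linarith
  · intro h
    refine ⟨fun i j => C1 i j + ((C2 - C1) i0 j), fun i i' j => by ring, fun i j j' => ?_⟩
    have h1 := h i j
    have h2 := h i j'
    simp only [Matrix.sub_apply] at h1 h2 ⊢
    linarith
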